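/- arXiv:1306.0290 — 5 statements merged into one kernel-verified Lean document; each statement's English description precedes it below -/
import Mathlib

section
/- For every positive integer n, the pushforward under the first-coordinate map x ↦ x₁ of the uniform probability measure on the n-dimensional closed unit ball {x ∈ ℝⁿ : Σᵢ xᵢ² ≤ 1} is absolutely continuous with respect to Lebesgue measure on ℝ, with density f_n(x) = Γ(n/2 + 1) / (Γ((n+1)/2) · √π) · (1 - x²)^((n-1)/2) on [-1, 1] and 0 outside [-1, 1]. -/
open Real MeasureTheory

/-- The density `f_n` of the first coordinate of a uniform random point in the
`n`-dimensional closed unit ball. -/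
noncomputable def ballCoordDensity (n : ℕ) (x : ℝ) : ℝ :=
  if x ∈ Set.Icc (-1 : ℝ) 1 then
    Real.Gamma ((n : ℝ) / 2 + 1) / (Real.Gamma (((n : ℝ) + 1) / 2) * Real.sqrt π) *
      (1 - x ^ 2) ^ (((n : ℝ) - 1) / 2)
  else 0

/-- The uniform probability measure on the `n`-dimensional closed unit ball:
Lebesgue measure restricted to the ball, normalized by the ball's volume. -/
noncomputable def uniformBall (n : ℕ) : Measure (EuclideanSpace ℝ (Fin n)) :=
  (volume (Metric.closedBall (0 : EuclideanSpace ℝ (Fin n)) 1))⁻¹ •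
    volume.restrict (Metric.closedBall (0 : EuclideanSpace ℝ (Fin n)) 1)

/-!
Split `ℝ^(m+1) = ℝ × ℝ^m` along the first coordinate. By Tonelli, the first coordinate of the
restriction of Lebesgue measure to the unit ball has density `t ↦ vol_m {y | t² + ‖y‖² ≤ 1}`, and
for `|t| ≤ 1` this slice is the ball of radius `√(1 - t²)`, of volume `(1 - t²)^(m/2) V_m`.
Dividing by `V_{m+1}` and using `V_m = π^(m/2) / Γ(m/2 + 1)` gives the stated density.
-/

theorem MeasureTheory.Measure.map_fst_restrict_prod {α β : Type*} [MeasurableSpace α]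
    [MeasurableSpace β] (μ : Measure α) (ν : Measure β) [SFinite ν] {S : Set (α × β)}
    (hS : MeasurableSet S) :
    ((μ.prod ν).restrict S).map Prod.fst = μ.withDensity fun a => ν (Prod.mk a ⁻¹' S) := by
  ext s hs
  rw [Measure.map_apply measurable_fst hs, Measure.restrict_apply (measurable_fst hs),
    Measure.prod_apply (measurable_fst hs |>.inter hS), withDensity_apply _ hs,
    ← lintegral_indicator hs]
  congr 1 with a
  by_cases ha : a ∈ s <;> simp [ha, Set.preimage]

namespace EuclideanSpace

theorem volume_closedBall_fin (m : ℕ) (x : EuclideanSpace ℝ (Fin m)) {r : ℝ} (hr : 0 ≤ r) :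
    volume (Metric.closedBall x r) =
      .ofReal r ^ m * .ofReal (√π ^ m / Gamma (m / 2 + 1)) := by
  cases m with
  | zero =>
    rw [Metric.closedBall_eq_singleton_of_subsingleton hr,
      ← (PiLp.volume_preserving_toLp (Fin 0)).measure_preimage
        (measurableSet_singleton _).nullMeasurableSet]
    simp [Subsingleton.eq_univ_of_nonempty, volume_pi]
  | succ m => simpa using volume_closedBall (Fin (m + 1)) x r

variable (m : ℕ)

noncomputable def measurableEquivProdFinSucc :
    EuclideanSpace ℝ (Fin (m + 1)) ≃ᵐ ℝ × EuclideanSpace ℝ (Fin m) :=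
  (MeasurableEquiv.toLp 2 (Fin (m + 1) → ℝ)).symm.trans <|
    (MeasurableEquiv.piFinSuccAbove (fun _ => ℝ) 0).trans <|
      MeasurableEquiv.prodCongr (MeasurableEquiv.refl ℝ) (MeasurableEquiv.toLp 2 (Fin m → ℝ))

theorem volume_preserving_measurableEquivProdFinSucc :
    MeasurePreserving (measurableEquivProdFinSucc m) :=
  (volume_preserving_symm_measurableEquiv_toLp _).trans <|
    (volume_preserving_piFinSuccAbove (fun _ => ℝ) 0).trans <|
      (MeasurePreserving.id volume).prod (PiLp.volume_preserving_toLp _)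

theorem norm_sq_eq_measurableEquivProdFinSucc (x : EuclideanSpace ℝ (Fin (m + 1))) :
    ‖x‖ ^ 2 =
      (measurableEquivProdFinSucc m x).1 ^ 2 + ‖(measurableEquivProdFinSucc m x).2‖ ^ 2 := by
  simp [real_norm_sq_eq, Fin.sum_univ_succ, measurableEquivProdFinSucc,
    MeasurableEquiv.prodCongr, Fin.tail]

end EuclideanSpace

theorem setOf_sq_add_norm_sq_le_one {E : Type*} [SeminormedAddCommGroup E] {t : ℝ}
    (ht : t ^ 2 ≤ 1) : {y : E | t ^ 2 + ‖y‖ ^ 2 ≤ 1} = Metric.closedBall 0 √(1 - t ^ 2) := by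
  ext y
  rw [Set.mem_ofPred_eq, mem_closedBall_zero_iff, Real.le_sqrt (norm_nonneg y) (by linarith)]
  constructor <;> intro h <;> linarith

theorem setOf_sq_add_norm_sq_le_one_eq_empty {E : Type*} [SeminormedAddCommGroup E] {t : ℝ}
    (ht : 1 < t ^ 2) : {y : E | t ^ 2 + ‖y‖ ^ 2 ≤ 1} = ∅ :=
  Set.eq_empty_of_forall_notMem fun y hy => by
    have := sq_nonneg ‖y‖
    exact absurd hy (by simp only [Set.mem_ofPred_eq, not_le]; linarith)

theorem ballCoordDensity_succ_of_mem {m : ℕ} {t : ℝ} (ht : t ∈ Set.Icc (-1 : ℝ) 1) :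
    ballCoordDensity (m + 1) t =
      √(1 - t ^ 2) ^ m * (√π ^ m / Gamma (m / 2 + 1)) /
        (√π ^ (m + 1) / Gamma (((m + 1 : ℕ) : ℝ) / 2 + 1)) := by
  have hsq : 0 ≤ 1 - t ^ 2 := by nlinarith [ht.1, ht.2]
  have hexp : (((m + 1 : ℕ) : ℝ) - 1) / 2 = (1 / 2 : ℝ) * m := by push_cast; ring
  have hGamma : (((m + 1 : ℕ) : ℝ) + 1) / 2 = m / 2 + 1 := by push_cast; ring
  rw [ballCoordDensity, if_pos ht, hexp, hGamma, Real.rpow_mul hsq, Real.rpow_natCast,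
    ← Real.sqrt_eq_rpow]
  have : Gamma (m / 2 + 1) ≠ 0 := (Gamma_pos_of_pos (by positivity)).ne'
  have : Gamma (((m + 1 : ℕ) : ℝ) / 2 + 1) ≠ 0 := (Gamma_pos_of_pos (by positivity)).ne'
  field_simp
  ring

theorem ofReal_ballCoordDensity_succ (m : ℕ) (t : ℝ) :
    ENNReal.ofReal (ballCoordDensity (m + 1) t) =
      (volume (Metric.closedBall (0 : EuclideanSpace ℝ (Fin (m + 1))) 1))⁻¹ *
        volume {y : EuclideanSpace ℝ (Fin m) | t ^ 2 + ‖y‖ ^ 2 ≤ 1} := by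
  by_cases ht : t ∈ Set.Icc (-1 : ℝ) 1
  · have ht2 : t ^ 2 ≤ 1 := by nlinarith [ht.1, ht.2]
    rw [setOf_sq_add_norm_sq_le_one ht2,
      EuclideanSpace.volume_closedBall_fin _ _ (Real.sqrt_nonneg _),
      EuclideanSpace.volume_closedBall_fin _ _ zero_le_one, ENNReal.ofReal_one, one_pow, one_mul,
      ← ENNReal.ofReal_pow (Real.sqrt_nonneg _), ← ENNReal.ofReal_mul (by positivity),
      ← ENNReal.ofReal_inv_of_pos (by positivity), ← ENNReal.ofReal_mul (by positivity),
      ballCoordDensity_succ_of_mem ht, div_eq_inv_mul]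
  · have ht2 : 1 < t ^ 2 := by
      by_contra! h
      exact ht ⟨by nlinarith, by nlinarith⟩
    rw [setOf_sq_add_norm_sq_le_one_eq_empty ht2, ballCoordDensity, if_neg ht]
    simp

/-- For every positive integer `n`, the pushforward of the uniform probability measure on
the `n`-dimensional closed unit ball under the first-coordinate map is absolutely
continuous with respect to Lebesgue measure, with density `f_n`. -/
theorem map_uniformBall_firstCoord (n : ℕ) (hn : 0 < n) :
    Measure.map (fun x : EuclideanSpace ℝ (Fin n) => x ⟨0, hn⟩) (uniformBall n) =
      volume.withDensity (fun x => ENNReal.ofReal (ballCoordDensity n x)) := by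
  obtain ⟨m, rfl⟩ := Nat.exists_eq_add_one.mpr hn
  set e := EuclideanSpace.measurableEquivProdFinSucc m
  set S := {p : ℝ × EuclideanSpace ℝ (Fin m) | p.1 ^ 2 + ‖p.2‖ ^ 2 ≤ 1}
  have hS : MeasurableSet S := measurableSet_le (by fun_prop) measurable_const
  have hB : Metric.closedBall 0 1 = e ⁻¹' S := by
    ext x
    rw [Set.mem_preimage, mem_closedBall_zero_iff, ← sq_le_one_iff₀ (norm_nonneg x),
      EuclideanSpace.norm_sq_eq_measurableEquivProdFinSucc]
    rfl
  have hc : volume (Metric.closedBall (0 : EuclideanSpace ℝ (Fin (m + 1))) 1) ≠ 0 :=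
    (Metric.measure_closedBall_pos volume _ one_pos).ne'
  calc Measure.map (fun x : EuclideanSpace ℝ (Fin (m + 1)) => x ⟨0, hn⟩) (uniformBall (m + 1))
      = (volume (Metric.closedBall (0 : EuclideanSpace ℝ (Fin (m + 1))) 1))⁻¹ •
          ((volume.prod volume).restrict S).map Prod.fst := by
        rw [uniformBall, Measure.map_smul, ← Measure.volume_eq_prod,
          ← ((EuclideanSpace.volume_preserving_measurableEquivProdFinSucc m).restrict_preimage
            hS).map_eq,
          Measure.map_map measurable_fst e.measurable, ← hB]
        -- `(e x).1` is `x 0` by definition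
        rfl
    _ = _ := by
        rw [Measure.map_fst_restrict_prod _ _ hS,
          ← withDensity_smul' _ _ (ENNReal.inv_ne_top.mpr hc)]
        congr with t
        exact (ofReal_ballCoordDensity_succ m t).symm
end

section
/- For every positive integer n and every real t, the characteristic function of the random variable z = √(n+2) · x₁, where x₁ has density f_n, admits the series representation φ_{n,Z}(t) = ∫_{-√(n+2)}^{√(n+2)} g_n(z) e^{itz} dz = Σ_{k=0}^{∞} (−(n+2) t² / 4)^k · Γ(n/2 + 1) / (k! · Γ(n/2 + 1 + k)). -/
open Real

/-- The density `g_n` of the rescaled variable `z = √(n+2) · x₁`. -/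
noncomputable def rescaledDensity (n : ℕ) (z : ℝ) : ℝ :=
  if |z| ≤ Real.sqrt ((n : ℝ) + 2) then
    ballCoordDensity n (z / Real.sqrt ((n : ℝ) + 2)) / Real.sqrt ((n : ℝ) + 2)
  else 0

/-!
Substituting `z = √(n+2) x` turns the integral into `∫₋₁¹ f_n(x) e^{iax} dx` with
`a = t √(n+2)`; since `f_n` is even, only the cosine survives. Expanding the cosine in its power
series and integrating term by term (the series of absolute values sums to `|f_n(x)| cosh(ax)`)
leaves the even moments `∫₋₁¹ x^{2k} (1 - x²)^{(n-1)/2} dx`, which the substitution `u = x²`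
turns into the beta integral `B(k + 1/2, (n+1)/2)`. The duplication formula
`Γ(k + 1/2) k! = √π (2k)! / 4^k` then collapses each term to the `k`-th term of the `₀F₁` series.
-/

open MeasureTheory

namespace Real

theorem integral_rpow_mul_one_sub_rpow {a b : ℝ} (ha : 0 < a) (hb : 0 < b) :
    ∫ x in (0 : ℝ)..1, x ^ (a - 1) * (1 - x) ^ (b - 1) = Gamma a * Gamma b / Gamma (a + b) := by
  have hbeta : Complex.betaIntegral a b =
      ↑(∫ x in (0 : ℝ)..1, x ^ (a - 1) * (1 - x) ^ (b - 1)) := by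
    rw [Complex.betaIntegral, ← intervalIntegral.integral_ofReal]
    refine intervalIntegral.integral_congr fun x hx => ?_
    rw [Set.uIcc_of_le zero_le_one] at hx
    push_cast
    rw [Complex.ofReal_cpow hx.1, Complex.ofReal_cpow (sub_nonneg.2 hx.2)]
    push_cast
    ring
  have h := Complex.Gamma_mul_Gamma_eq_betaIntegral (s := a) (t := b)
    (by simpa using ha) (by simpa using hb)
  rw [hbeta, ← Complex.ofReal_add, Complex.Gamma_ofReal, Complex.Gamma_ofReal,
    Complex.Gamma_ofReal] at h
  rw [eq_div_iff (Gamma_pos_of_pos (add_pos ha hb)).ne', mul_comm]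
  exact_mod_cast h.symm

theorem Gamma_nat_add_half_eq_factorial (m : ℕ) :
    Gamma (m + 1 / 2) = √π * (2 * m).factorial / (4 ^ m * m.factorial) := by
  have h := Gamma_mul_Gamma_add_half (m + 1 / 2)
  rw [show (m : ℝ) + 1 / 2 + 1 / 2 = m + 1 by ring, Gamma_nat_eq_factorial,
    show 2 * ((m : ℝ) + 1 / 2) = ((2 * m : ℕ) : ℝ) + 1 by push_cast; ring,
    Gamma_nat_eq_factorial,
    show (1 : ℝ) - (((2 * m : ℕ) : ℝ) + 1) = -((2 * m : ℕ) : ℝ) by ring,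
    rpow_neg zero_le_two, rpow_natCast, pow_mul] at h
  have : (0 : ℝ) < m.factorial := by positivity
  field_simp at h ⊢
  norm_num at h
  linarith

end Real

namespace Function

variable {E : Type*} [NormedAddCommGroup E] [NormedSpace ℝ E] {f : ℝ → E}

theorem Odd.intervalIntegral_eq_zero (hf : f.Odd) (R : ℝ) : ∫ x in -R..R, f x = 0 := by
  have h := intervalIntegral.integral_comp_neg (a := -R) (b := R) f
  simp only [neg_neg, hf _, intervalIntegral.integral_neg] at h
  have h2 : (2 : ℝ) • ∫ x in -R..R, f x = 0 := by
    rw [two_smul]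
    nth_rewrite 1 [← h]
    exact neg_add_cancel _
  exact (smul_eq_zero.1 h2).resolve_left two_ne_zero

theorem Even.intervalIntegral_eq_two_smul (hf : f.Even) {R : ℝ}
    (hint : IntervalIntegrable f volume (-R) R) :
    ∫ x in -R..R, f x = (2 : ℝ) • ∫ x in 0..R, f x := by
  have hneg : ∫ x in -R..0, f x = ∫ x in 0..R, f x := by
    simpa [hf _] using (intervalIntegral.integral_comp_neg (a := 0) (b := R) f).symm
  have h0 : (0 : ℝ) ∈ Set.uIcc (-R) R := by
    rcases le_total 0 R with h | h <;> simp [h]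
  rw [← intervalIntegral.integral_add_adjacent_intervals
    (hint.mono_set (Set.uIcc_subset_uIcc_left h0))
    (hint.mono_set (Set.uIcc_subset_uIcc_right h0)), hneg, two_smul]

theorem Even.intervalIntegral_mul_exp_eq_mul_cos {w : ℝ → ℝ} (hw : w.Even) {R : ℝ}
    (hint : IntervalIntegrable w volume (-R) R) (a : ℝ) :
    ∫ x in -R..R, (w x : ℂ) * Complex.exp (Complex.I * a * x) =
      ↑(∫ x in -R..R, w x * cos (a * x)) := by
  have hexp : ∀ x : ℝ, (w x : ℂ) * Complex.exp (Complex.I * a * x) =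
      ↑(w x * cos (a * x)) + ↑(w x * sin (a * x)) * Complex.I := by
    intro x
    rw [show Complex.I * a * x = ↑(a * x) * Complex.I by push_cast; ring, Complex.exp_mul_I]
    push_cast
    ring
  have hodd : (fun x => w x * sin (a * x)).Odd := fun x => by simp [hw x]
  have hcos : IntervalIntegrable (fun x => w x * cos (a * x)) volume (-R) R :=
    hint.mul_continuousOn (by fun_prop : Continuous fun x => cos (a * x)).continuousOn
  have hsin : IntervalIntegrable (fun x => w x * sin (a * x)) volume (-R) R :=
    hint.mul_continuousOn (by fun_prop : Continuous fun x => sin (a * x)).continuousOn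
  have hcosC : IntervalIntegrable (fun x => ((w x * cos (a * x) : ℝ) : ℂ)) volume (-R) R :=
    ⟨hcos.1.ofReal, hcos.2.ofReal⟩
  have hsinC : IntervalIntegrable (fun x => ((w x * sin (a * x) : ℝ) : ℂ)) volume (-R) R :=
    ⟨hsin.1.ofReal, hsin.2.ofReal⟩
  simp_rw [hexp]
  rw [intervalIntegral.integral_add hcosC (hsinC.mul_const _),
    intervalIntegral.integral_mul_const, intervalIntegral.integral_ofReal,
    intervalIntegral.integral_ofReal, hodd.intervalIntegral_eq_zero, Complex.ofReal_zero, zero_mul,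
    add_zero]

end Function

theorem hasSum_intervalIntegral_mul_cos {w : ℝ → ℝ} {l u : ℝ}
    (hw : IntervalIntegrable w volume l u) (a : ℝ) :
    HasSum (fun m : ℕ => (-1) ^ m * a ^ (2 * m) / (2 * m).factorial *
        ∫ x in l..u, x ^ (2 * m) * w x)
      (∫ x in l..u, w x * cos (a * x)) := by
  have hcosh : Continuous fun x => cosh (a * x) := by fun_prop
  have hsum := intervalIntegral.hasSum_integral_of_dominated_convergence
    (F := fun (m : ℕ) x => w x * ((-1) ^ m * (a * x) ^ (2 * m) / (2 * m).factorial))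
    (fun m x => |w x| * (|a * x| ^ (2 * m) / (2 * m).factorial))
    (fun m => (hw.mul_continuousOn (by fun_prop)).def'.aestronglyMeasurable)
    (fun m => Filter.Eventually.of_forall fun x _ => by simp [abs_mul])
    (Filter.Eventually.of_forall fun x _ => ((hasSum_cosh |a * x|).mul_left |w x|).summable)
    (by
      simp_rw [((hasSum_cosh _).mul_left _).tsum_eq, cosh_abs]
      exact hw.abs.mul_continuousOn hcosh.continuousOn)
    (Filter.Eventually.of_forall fun x _ => (hasSum_cos (a * x)).mul_left (w x))
  refine hsum.congr_fun fun m => ?_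
  rw [← intervalIntegral.integral_const_mul]
  congr 1 with x
  ring

theorem continuous_one_sub_sq_rpow {p : ℝ} (hp : 0 ≤ p) :
    Continuous fun x : ℝ => (1 - x ^ 2) ^ p :=
  (by fun_prop : Continuous fun x : ℝ => 1 - x ^ 2).rpow_const fun _ => Or.inr hp

theorem integral_comp_sq_mul_two_mul (g : ℝ → ℝ) :
    ∫ x in (0 : ℝ)..1, g (x ^ 2) * (2 * x) = ∫ u in (0 : ℝ)..1, g u := by
  have h := intervalIntegral.integral_comp_mul_deriv_of_deriv_nonneg (a := 0) (b := 1)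
    (f := fun x => x ^ 2) (f' := fun x => 2 * x) (g := g) (by fun_prop)
    (fun x _ => by simpa using hasDerivAt_pow 2 x) (fun x hx => by simp at hx; linarith [hx.1])
  rwa [zero_pow two_ne_zero, one_pow] at h

theorem integral_pow_two_mul_mul_one_sub_sq_rpow (m : ℕ) {p : ℝ} (hp : 0 ≤ p) :
    ∫ x in (-1 : ℝ)..1, x ^ (2 * m) * (1 - x ^ 2) ^ p =
      Gamma (m + 1 / 2) * Gamma (p + 1) / Gamma (m + 1 / 2 + (p + 1)) := by
  have heven : (fun x : ℝ => x ^ (2 * m) * (1 - x ^ 2) ^ p).Even := fun x => by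
    simp [Even.neg_pow (even_two_mul m)]
  have hcont : Continuous fun x : ℝ => x ^ (2 * m) * (1 - x ^ 2) ^ p :=
    (continuous_pow _).mul (continuous_one_sub_sq_rpow hp)
  have hsub : ∀ x ∈ Set.uIoc (0 : ℝ) 1, 2 * (x ^ (2 * m) * (1 - x ^ 2) ^ p) =
      (x ^ 2) ^ ((m : ℝ) + 1 / 2 - 1) * (1 - x ^ 2) ^ (p + 1 - 1) * (2 * x) := by
    intro x hx
    rw [Set.uIoc_of_le zero_le_one] at hx
    have hx0 : 0 < x := hx.1
    have hx2 : 0 < x ^ 2 := by positivity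
    have : (x ^ 2) ^ ((m : ℝ) + 1 / 2 - 1) * x = x ^ (2 * m) := by
      rw [show (m : ℝ) + 1 / 2 - 1 = m - 1 / 2 by ring, rpow_sub hx2, rpow_natCast, ← pow_mul,
        ← sqrt_eq_rpow, sqrt_sq hx0.le]
      field_simp
    rw [add_sub_cancel_right, ← this]
    ring
  rw [heven.intervalIntegral_eq_two_smul (hcont.intervalIntegrable _ _), smul_eq_mul,
    ← intervalIntegral.integral_const_mul,
    intervalIntegral.integral_congr_ae (Filter.Eventually.of_forall hsub),
    integral_comp_sq_mul_two_mul (fun u => u ^ ((m : ℝ) + 1 / 2 - 1) * (1 - u) ^ (p + 1 - 1)),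
    integral_rpow_mul_one_sub_rpow (by positivity) (by positivity)]

theorem ballCoordDensity_even (n : ℕ) : (ballCoordDensity n).Even := fun x => by
  simp [ballCoordDensity, neg_le, and_comm]

theorem ballCoordDensity_eqOn_Icc (n : ℕ) :
    Set.EqOn (ballCoordDensity n) (fun x => Gamma (n / 2 + 1) / (Gamma ((n + 1) / 2) * √π) *
      (1 - x ^ 2) ^ (((n : ℝ) - 1) / 2)) (Set.Icc (-1) 1) :=
  fun _ hx => if_pos hx

theorem intervalIntegrable_ballCoordDensity {n : ℕ} (hn : 0 < n) :
    IntervalIntegrable (ballCoordDensity n) volume (-1) 1 := by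
  have hp : (0 : ℝ) ≤ ((n : ℝ) - 1) / 2 :=
    div_nonneg (sub_nonneg.2 (Nat.one_le_cast.2 hn)) zero_le_two
  refine ContinuousOn.intervalIntegrable ?_
  rw [Set.uIcc_of_le (by norm_num)]
  exact (continuousOn_const.mul (continuous_one_sub_sq_rpow hp).continuousOn).congr
    (ballCoordDensity_eqOn_Icc n)

theorem integral_pow_two_mul_mul_ballCoordDensity {n : ℕ} (hn : 0 < n) (m : ℕ) :
    ∫ x in (-1 : ℝ)..1, x ^ (2 * m) * ballCoordDensity n x =
      Gamma (n / 2 + 1) * (2 * m).factorial / (4 ^ m * m.factorial * Gamma (n / 2 + 1 + m)) := by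
  have hp : (0 : ℝ) ≤ ((n : ℝ) - 1) / 2 :=
    div_nonneg (sub_nonneg.2 (Nat.one_le_cast.2 hn)) zero_le_two
  rw [intervalIntegral.integral_congr (g := fun x => Gamma (n / 2 + 1) /
        (Gamma ((n + 1) / 2) * √π) * (x ^ (2 * m) * (1 - x ^ 2) ^ (((n : ℝ) - 1) / 2)))
      (fun x hx => by
        rw [Set.uIcc_of_le (by norm_num)] at hx
        simp only [ballCoordDensity_eqOn_Icc n hx]
        ring),
    intervalIntegral.integral_const_mul, integral_pow_two_mul_mul_one_sub_sq_rpow m hp,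
    Gamma_nat_add_half_eq_factorial, show ((n : ℝ) - 1) / 2 + 1 = (n + 1) / 2 by ring,
    show (m : ℝ) + 1 / 2 + (n + 1) / 2 = n / 2 + 1 + m by ring]
  have : 0 < Gamma (((n : ℝ) + 1) / 2) := Gamma_pos_of_pos (by positivity)
  have : 0 < Gamma ((n : ℝ) / 2 + 1 + m) := Gamma_pos_of_pos (by positivity)
  field_simp

theorem rescaledDensity_eq (n : ℕ) (z : ℝ) :
    rescaledDensity n z = ballCoordDensity n (z / √(n + 2)) / √(n + 2) := by
  have hs : 0 < √((n : ℝ) + 2) := sqrt_pos.2 (by positivity)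
  unfold rescaledDensity
  split_ifs with hz
  · rfl
  · rw [ballCoordDensity, if_neg, zero_div]
    rwa [Set.mem_Icc, ← abs_le, abs_div, abs_of_pos hs, div_le_one hs]

theorem integral_rescaledDensity_mul_exp {n : ℕ} (hn : 0 < n) (t : ℝ) :
    ∫ z in -√(n + 2)..√(n + 2), (rescaledDensity n z : ℂ) * Complex.exp (Complex.I * t * z) =
      ↑(∫ x in (-1 : ℝ)..1, ballCoordDensity n x * cos (t * √(n + 2) * x)) := by
  set s := √((n : ℝ) + 2)
  have hs : 0 < s := sqrt_pos.2 (by positivity)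
  have hsC : (s : ℂ) ≠ 0 := Complex.ofReal_ne_zero.2 hs.ne'
  set h : ℝ → ℂ := fun x =>
    (ballCoordDensity n x : ℂ) / s * Complex.exp (Complex.I * ↑(t * s) * x)
  have hscale := intervalIntegral.integral_comp_div (a := -s) (b := s) h hs.ne'
  rw [neg_div, div_self hs.ne'] at hscale
  rw [← (ballCoordDensity_even n).intervalIntegral_mul_exp_eq_mul_cos
    (intervalIntegrable_ballCoordDensity hn)]
  calc ∫ z in -s..s, (rescaledDensity n z : ℂ) * Complex.exp (Complex.I * t * z)
      = ∫ z in -s..s, h (z / s) := by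
        refine intervalIntegral.integral_congr fun z _ => ?_
        simp only [h, rescaledDensity_eq, Complex.ofReal_div, Complex.ofReal_mul]
        rw [show Complex.I * (t * s) * (z / s) = Complex.I * t * z by field_simp]
    _ = ∫ x in (-1 : ℝ)..1,
          (ballCoordDensity n x : ℂ) * Complex.exp (Complex.I * ↑(t * s) * x) := by
        rw [hscale, ← intervalIntegral.integral_smul]
        refine intervalIntegral.integral_congr fun x _ => ?_
        simp only [h, Complex.real_smul]
        field_simp

/-- For every positive integer `n` and every real `t`, the characteristic function of the
rescaled coordinate `z = √(n+2) · x₁` admits the hypergeometric series representation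
`φ_{n,Z}(t) = Σ_{k=0}^∞ (−(n+2)t²/4)^k · Γ(n/2+1) / (k! · Γ(n/2+1+k))`. -/
theorem charFun_eq_hypergeometric_series (n : ℕ) (hn : 0 < n) (t : ℝ) :
    ∫ z in (-(Real.sqrt ((n : ℝ) + 2)))..(Real.sqrt ((n : ℝ) + 2)),
        (rescaledDensity n z : ℂ) * Complex.exp (Complex.I * (t : ℂ) * (z : ℂ)) =
      ∑' k : ℕ,
        (((-(((n : ℝ) + 2)) * t ^ 2 / 4) ^ k * Real.Gamma ((n : ℝ) / 2 + 1) /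
          ((k.factorial : ℝ) * Real.Gamma ((n : ℝ) / 2 + 1 + (k : ℝ))) : ℝ) : ℂ) := by
  rw [integral_rescaledDensity_mul_exp hn, ← Complex.ofReal_tsum, Complex.ofReal_inj,
    ← (hasSum_intervalIntegral_mul_cos (intervalIntegrable_ballCoordDensity hn) _).tsum_eq]
  refine tsum_congr fun k => ?_
  have hsq : (t * √((n : ℝ) + 2)) ^ (2 * k) = (t ^ 2 * (n + 2)) ^ k := by
    rw [pow_mul, mul_pow, sq_sqrt (by positivity)]
  have : 0 < Gamma ((n : ℝ) / 2 + 1 + k) := Gamma_pos_of_pos (by positivity)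
  rw [integral_pow_two_mul_mul_ballCoordDensity hn, hsq,
    show -((n : ℝ) + 2) * t ^ 2 / 4 = -1 / 4 * (t ^ 2 * (n + 2)) by ring, mul_pow (-1 / 4 : ℝ),
    div_pow]
  field_simp
end

section
/- For every real t, the characteristic functions φ_{n,Z}(t) = ∫_{-√(n+2)}^{√(n+2)} g_n(z) e^{itz} dz converge as n → ∞ to e^{−t²/2}, the characteristic function of the standard normal distribution. -/
open Real Filter

/-! On `z ^ 2 ≤ n + 2` the density `g_n` equals `c_n (1 - z ^ 2 / (n + 2)) ^ ((n - 1) / 2)`.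
Log-convexity of `Γ` squeezes `(Γ (y + 1) / Γ (y + 1 / 2)) ^ 2` between `y` and `y + 1 / 2`,
which gives `c_n → 1 / √(2π)`; the power tends to `exp (-z ^ 2 / 2)` and, once `n ≥ 4`, is at
most `exp (-z ^ 2 / 4)`. Dominated convergence then turns `φ_{n,Z}(t)` into the characteristic
function of the standard Gaussian at `t`. -/

open MeasureTheory ProbabilityTheory Topology

namespace Real

theorem Gamma_add_half_sq_le {x : ℝ} (hx : 0 < x) :
    Gamma (x + 1 / 2) ^ 2 ≤ Gamma x * Gamma (x + 1) := by
  have h := Gamma_mul_add_mul_le_rpow_Gamma_mul_rpow_Gamma hx (by linarith : 0 < x + 1)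
    (by norm_num : (0 : ℝ) < 1 / 2) (by norm_num : (0 : ℝ) < 1 / 2) (by norm_num)
  rw [show 1 / 2 * x + 1 / 2 * (x + 1) = x + 1 / 2 by ring, ← mul_rpow (by positivity)
    (by positivity), ← sqrt_eq_rpow] at h
  calc Gamma (x + 1 / 2) ^ 2 ≤ √(Gamma x * Gamma (x + 1)) ^ 2 := by gcongr
    _ = Gamma x * Gamma (x + 1) := sq_sqrt (by positivity)

theorem le_Gamma_add_one_div_Gamma_add_half_sq {y : ℝ} (hy : 0 < y) :
    y ≤ (Gamma (y + 1) / Gamma (y + 1 / 2)) ^ 2 := by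
  have h := Gamma_add_half_sq_le hy
  rw [Gamma_add_one hy.ne'] at h
  rw [div_pow, le_div_iff₀ (by positivity), Gamma_add_one hy.ne']
  nlinarith [Gamma_pos_of_pos hy]

theorem Gamma_add_one_div_Gamma_add_half_sq_le {y : ℝ} (hy : 0 < y) :
    (Gamma (y + 1) / Gamma (y + 1 / 2)) ^ 2 ≤ y + 1 / 2 := by
  have h := Gamma_add_half_sq_le (by linarith : 0 < y + 1 / 2)
  rw [Gamma_add_one (s := y + 1 / 2) (by positivity), show y + 1 / 2 + 1 / 2 = y + 1 by ring] at h
  rw [div_pow, div_le_iff₀ (by positivity)]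
  linarith

theorem tendsto_Gamma_add_one_div_Gamma_add_half_div_sqrt :
    Tendsto (fun y => Gamma (y + 1) / Gamma (y + 1 / 2) / √y) atTop (𝓝 1) := by
  have hsq : Tendsto (fun y => (Gamma (y + 1) / Gamma (y + 1 / 2)) ^ 2 / y) atTop (𝓝 1) := by
    have hupper : Tendsto (fun y : ℝ => 1 + 1 / 2 / y) atTop (𝓝 1) := by
      simpa using tendsto_const_nhds.div_atTop tendsto_id |>.const_add (1 : ℝ)
    refine tendsto_of_tendsto_of_tendsto_of_le_of_le' tendsto_const_nhds hupper ?_ ?_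
    · filter_upwards [eventually_gt_atTop 0] with y hy
      rw [le_div_iff₀ hy, one_mul]
      exact le_Gamma_add_one_div_Gamma_add_half_sq hy
    · filter_upwards [eventually_gt_atTop 0] with y hy
      rw [div_le_iff₀ hy, add_mul, one_mul, div_mul_cancel₀ _ hy.ne']
      exact Gamma_add_one_div_Gamma_add_half_sq_le hy
  have h := (continuous_sqrt.tendsto 1).comp hsq
  rw [sqrt_one] at h
  refine h.congr' ?_
  filter_upwards [eventually_gt_atTop 0] with y hy
  have hratio : 0 < Gamma (y + 1) / Gamma (y + 1 / 2) :=
    div_pos (Gamma_pos_of_pos (by linarith)) (Gamma_pos_of_pos (by linarith))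
  rw [Function.comp_apply, sqrt_div' _ hy.le, sqrt_sq hratio.le]

end Real

theorem tendsto_one_add_div_rpow_mul_add_exp (t c b : ℝ) :
    Tendsto (fun x : ℝ => (1 + t / x) ^ (c * x + b)) atTop (𝓝 (exp (t * c))) := by
  have hexp : Tendsto (fun x : ℝ => c + b / x) atTop (𝓝 c) := by
    simpa using tendsto_const_nhds.div_atTop tendsto_id |>.const_add c
  have h := (tendsto_one_add_div_rpow_exp t).rpow hexp (Or.inl (exp_ne_zero t))
  rw [← exp_mul] at h
  refine h.congr' ?_
  filter_upwards [eventually_gt_atTop 0, eventually_ge_atTop (-t)] with x hx hxt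
  have hbase : 0 ≤ 1 + t / x := by
    rw [← div_self hx.ne', ← add_div]
    exact div_nonneg (by linarith) hx.le
  rw [← rpow_mul hbase, mul_add, mul_div_cancel₀ _ hx.ne', mul_comm]

theorem one_sub_rpow_le_exp_neg_mul {w p : ℝ} (hw : w ≤ 1) (hp : 0 ≤ p) :
    (1 - w) ^ p ≤ exp (-w * p) := by
  rw [exp_mul]
  exact rpow_le_rpow (by linarith) (one_sub_le_exp_neg w) hp

noncomputable def rescaledNormConst (n : ℕ) : ℝ :=
  Gamma ((n : ℝ) / 2 + 1) / (Gamma (((n : ℝ) + 1) / 2) * √π) / √((n : ℝ) + 2)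

theorem rescaledNormConst_nonneg (n : ℕ) : 0 ≤ rescaledNormConst n := by
  unfold rescaledNormConst
  positivity

theorem rescaledDensity_of_sq_le {n : ℕ} {z : ℝ} (hz : z ^ 2 ≤ (n : ℝ) + 2) :
    rescaledDensity n z =
      rescaledNormConst n * (1 - z ^ 2 / ((n : ℝ) + 2)) ^ (((n : ℝ) - 1) / 2) := by
  have hs : 0 < √((n : ℝ) + 2) := sqrt_pos.2 (by positivity)
  have habs : |z| ≤ √((n : ℝ) + 2) := by rwa [abs_le, ← Real.sq_le (by positivity)]
  have hmem : z / √((n : ℝ) + 2) ∈ Set.Icc (-1 : ℝ) 1 := by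
    rwa [Set.mem_Icc, ← abs_le, abs_div, abs_of_pos hs, div_le_one hs]
  rw [rescaledDensity, if_pos habs, ballCoordDensity, if_pos hmem, div_pow,
    sq_sqrt (by positivity), rescaledNormConst]
  ring

theorem rescaledDensity_of_lt_sq {n : ℕ} {z : ℝ} (hz : (n : ℝ) + 2 < z ^ 2) :
    rescaledDensity n z = 0 := by
  have habs : ¬ |z| ≤ √((n : ℝ) + 2) := by
    rwa [abs_le, ← Real.sq_le (by positivity), not_le]
  rw [rescaledDensity, if_neg habs]

theorem rescaledDensity_nonneg (n : ℕ) (z : ℝ) : 0 ≤ rescaledDensity n z := by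
  rcases le_or_gt (z ^ 2) ((n : ℝ) + 2) with hz | hz
  · rw [rescaledDensity_of_sq_le hz]
    have hw : z ^ 2 / ((n : ℝ) + 2) ≤ 1 := by rwa [div_le_one (by positivity)]
    exact mul_nonneg (rescaledNormConst_nonneg n) (rpow_nonneg (by linarith) _)
  · rw [rescaledDensity_of_lt_sq hz]

@[fun_prop]
theorem measurable_rescaledDensity (n : ℕ) : Measurable (rescaledDensity n) := by
  have hball : Measurable (ballCoordDensity n) :=
    Measurable.ite measurableSet_Icc (by fun_prop) measurable_const
  exact Measurable.ite (measurableSet_le (by fun_prop) (by fun_prop))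
    ((hball.comp (by fun_prop)).div_const _) measurable_const

theorem rescaledDensity_le_mul_exp {n : ℕ} (hn : 4 ≤ n) (z : ℝ) :
    rescaledDensity n z ≤ rescaledNormConst n * exp (-(1 / 4) * z ^ 2) := by
  rcases le_or_gt (z ^ 2) ((n : ℝ) + 2) with hz | hz
  · rw [rescaledDensity_of_sq_le hz]
    have hn' : (4 : ℝ) ≤ n := by exact_mod_cast hn
    have hw : z ^ 2 / ((n : ℝ) + 2) ≤ 1 := by rwa [div_le_one (by positivity)]
    refine mul_le_mul_of_nonneg_left ?_ (rescaledNormConst_nonneg n)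
    refine (one_sub_rpow_le_exp_neg_mul hw (by linarith)).trans (exp_le_exp.2 ?_)
    -- `(n - 1) / (2 (n + 2)) ≥ 1 / 4` exactly when `n ≥ 4`
    rw [neg_mul, neg_mul, neg_le_neg_iff, div_mul_div_comm, le_div_iff₀ (by positivity)]
    nlinarith [sq_nonneg z]
  · rw [rescaledDensity_of_lt_sq hz]
    exact mul_nonneg (rescaledNormConst_nonneg n) (exp_pos _).le

theorem tendsto_rescaledNormConst : Tendsto rescaledNormConst atTop (𝓝 (√(2 * π))⁻¹) := by
  have hratio := tendsto_Gamma_add_one_div_Gamma_add_half_div_sqrt.comp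
    (tendsto_natCast_atTop_atTop.atTop_div_const (two_pos : (0 : ℝ) < 2))
  have hfrac := ((continuous_sqrt.tendsto 1).comp (tendsto_natCast_div_add_atTop (2 : ℝ)))
  rw [sqrt_one] at hfrac
  have h := (hratio.mul hfrac).mul_const (√(2 * π))⁻¹
  rw [one_mul, one_mul] at h
  refine h.congr' ?_
  filter_upwards [eventually_gt_atTop 0] with n hn
  have hn' : (0 : ℝ) < n := by exact_mod_cast hn
  simp only [Function.comp_apply, rescaledNormConst, add_div, one_div]
  rw [sqrt_div' _ (by positivity), sqrt_div' _ (by positivity), sqrt_mul (by positivity)]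
  field_simp

theorem tendsto_rescaledDensity (z : ℝ) :
    Tendsto (fun n => rescaledDensity n z) atTop (𝓝 (gaussianPDFReal 0 1 z)) := by
  have hshift : Tendsto (fun n : ℕ => (n : ℝ) + 2) atTop atTop :=
    tendsto_atTop_add_const_right _ 2 tendsto_natCast_atTop_atTop
  have hpower := (tendsto_one_add_div_rpow_mul_add_exp (-z ^ 2) (1 / 2) (-3 / 2)).comp hshift
  have h := tendsto_rescaledNormConst.mul hpower
  simp only [gaussianPDFReal, NNReal.coe_one, mul_one, sub_zero]
  rw [show -z ^ 2 * (1 / 2) = -z ^ 2 / 2 by ring] at h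
  refine h.congr' ?_
  filter_upwards [hshift.eventually_ge_atTop (z ^ 2)] with n hn
  rw [rescaledDensity_of_sq_le hn, Function.comp_apply, neg_div, ← sub_eq_add_neg]
  congr 2
  ring

theorem intervalIntegral_rescaledDensity_mul (n : ℕ) (f : ℝ → ℂ) :
    ∫ z in -√((n : ℝ) + 2)..√((n : ℝ) + 2), (rescaledDensity n z : ℂ) * f z =
      ∫ z, (rescaledDensity n z : ℂ) * f z := by
  rw [intervalIntegral.integral_of_le (by simp), ← integral_Icc_eq_integral_Ioc]
  refine setIntegral_eq_integral_of_forall_compl_eq_zero fun z hz => ?_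
  rw [Set.mem_Icc, ← Real.sq_le (by positivity), not_le] at hz
  rw [rescaledDensity_of_lt_sq hz, Complex.ofReal_zero, zero_mul]

theorem integral_gaussianPDFReal_mul_cexp (t : ℝ) :
    ∫ z, (gaussianPDFReal 0 1 z : ℂ) * Complex.exp (Complex.I * t * z) =
      (exp (-t ^ 2 / 2) : ℂ) := by
  have h := charFun_gaussianReal (μ := 0) (v := 1) t
  rw [charFun_apply_real, integral_gaussianReal_eq_integral_smul one_ne_zero] at h
  simp only [Complex.real_smul] at h
  convert h using 3 with z
  · ring_nf
  · push_cast; ring_nf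

/-- For every real `t`, the characteristic functions
`φ_{n,Z}(t) = ∫_{-√(n+2)}^{√(n+2)} g_n(z) e^{itz} dz` converge as `n → ∞` to
`e^{−t²/2}`, the characteristic function of the standard normal distribution. -/
theorem tendsto_charFun_gaussian (t : ℝ) :
    Tendsto
      (fun n : ℕ =>
        ∫ z in (-(Real.sqrt ((n : ℝ) + 2)))..(Real.sqrt ((n : ℝ) + 2)),
          (rescaledDensity n z : ℂ) * Complex.exp (Complex.I * (t : ℂ) * (z : ℂ)))
      atTop (nhds ((Real.exp (-t ^ 2 / 2) : ℝ) : ℂ)) := by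
  simp_rw [intervalIntegral_rescaledDensity_mul, ← integral_gaussianPDFReal_mul_cexp t]
  have hone_lt : 1 < √(2 * π) := (lt_sqrt zero_le_one).2 (by nlinarith [pi_gt_three])
  have hconst_le : ∀ᶠ n in atTop, rescaledNormConst n ≤ 1 :=
    tendsto_rescaledNormConst.eventually_le_const (inv_lt_one_of_one_lt₀ hone_lt)
  refine tendsto_integral_filter_of_dominated_convergence (fun z => exp (-(1 / 4) * z ^ 2))
    (Eventually.of_forall fun n => by fun_prop) ?_ (integrable_exp_neg_mul_sq (by norm_num)) ?_
  · filter_upwards [hconst_le, eventually_ge_atTop 4] with n hn_const hn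
    refine Eventually.of_forall fun z => ?_
    rw [norm_mul, mul_assoc, ← Complex.ofReal_mul, Complex.norm_exp_I_mul_ofReal, mul_one,
      Complex.norm_real, norm_of_nonneg (rescaledDensity_nonneg n z)]
    exact (rescaledDensity_le_mul_exp hn z).trans (mul_le_of_le_one_left (exp_pos _).le hn_const)
  · refine Eventually.of_forall fun z => ?_
    exact ((Complex.continuous_ofReal.tendsto _).comp (tendsto_rescaledDensity z)).mul_const _
end

section
/- For every real z, the rescaled densities converge pointwise to the standard normal density: lim_{n → ∞} g_n(z) = e^{−z²/2} / √(2π), where g_n(z) = f_n(z/√(n+2)) / √(n+2) for |z| ≤ √(n+2) and g_n(z) = 0 otherwise. -/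
open Real Filter
open Topology

/-!
For `z² ≤ n + 2` the rescaled density is
`g_n(z) = Γ(s) / (Γ(s - 1/2) √s) · (2π)^{-1/2} · (1 - z²/(n+2))^{(n-1)/2}` with `s = (n+2)/2`.
The power tends to `e^{-z²/2}` because `x log (1 + t/x) → t`. The Gamma ratio tends to `1`:
log-convexity of `Γ`, together with `Γ(u+1) = u Γ(u)`, squeezes `(Γ(s) / Γ(s - 1/2))²`
between `s - 1` and `s - 1/2`.
-/

namespace Real

theorem sq_Gamma_midpoint_le {a b : ℝ} (ha : 0 < a) (hb : 0 < b) :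
    Gamma ((a + b) / 2) ^ 2 ≤ Gamma a * Gamma b := by
  have hmid : Gamma ((a + b) / 2) ≤ √(Gamma a * Gamma b) := by
    have h := Gamma_mul_add_mul_le_rpow_Gamma_mul_rpow_Gamma ha hb one_half_pos one_half_pos
      (add_halves 1)
    rwa [← mul_add, one_div_mul_eq_div, ← mul_rpow (Gamma_pos_of_pos ha).le
      (Gamma_pos_of_pos hb).le, ← sqrt_eq_rpow] at h
  calc Gamma ((a + b) / 2) ^ 2 ≤ √(Gamma a * Gamma b) ^ 2 :=
        pow_le_pow_left₀ (Gamma_pos_of_pos (by positivity)).le hmid 2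
    _ = Gamma a * Gamma b :=
        sq_sqrt (mul_pos (Gamma_pos_of_pos ha) (Gamma_pos_of_pos hb)).le

theorem sub_one_le_sq_Gamma_div_Gamma_sub_half {s : ℝ} (hs : 1 < s) :
    s - 1 ≤ (Gamma s / Gamma (s - 1 / 2)) ^ 2 := by
  have hΓ : Gamma s = (s - 1) * Gamma (s - 1) := by
    simpa using Gamma_add_one (s := s - 1) (by linarith)
  have h := sq_Gamma_midpoint_le (a := s - 1) (b := s) (by linarith) (by linarith)
  rw [show (s - 1 + s) / 2 = s - 1 / 2 by ring] at h
  rw [div_pow, le_div_iff₀ (pow_pos (Gamma_pos_of_pos (by linarith)) 2)]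
  calc (s - 1) * Gamma (s - 1 / 2) ^ 2 ≤ (s - 1) * (Gamma (s - 1) * Gamma s) :=
        mul_le_mul_of_nonneg_left h (by linarith)
    _ = Gamma s ^ 2 := by rw [sq, ← mul_assoc, ← hΓ]

theorem sq_Gamma_div_Gamma_sub_half_le {s : ℝ} (hs : 1 / 2 < s) :
    (Gamma s / Gamma (s - 1 / 2)) ^ 2 ≤ s - 1 / 2 := by
  have hΓ : Gamma (s + 1 / 2) = (s - 1 / 2) * Gamma (s - 1 / 2) := by
    rw [← Gamma_add_one (by linarith)]
    ring_nf
  have h := sq_Gamma_midpoint_le (a := s - 1 / 2) (b := s + 1 / 2) (by linarith) (by linarith)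
  rw [show (s - 1 / 2 + (s + 1 / 2)) / 2 = s by ring, hΓ] at h
  rw [div_pow, div_le_iff₀ (pow_pos (Gamma_pos_of_pos (by linarith)) 2)]
  linarith

theorem tendsto_Gamma_div_Gamma_sub_half_div_sqrt :
    Tendsto (fun s => Gamma s / Gamma (s - 1 / 2) / √s) atTop (𝓝 1) := by
  have hsq : Tendsto (fun s => (Gamma s / Gamma (s - 1 / 2)) ^ 2 / s) atTop (𝓝 1) := by
    have hlow : Tendsto (fun s : ℝ => 1 - s⁻¹) atTop (𝓝 1) := by
      simpa using tendsto_const_nhds.sub (tendsto_inv_atTop_zero (𝕜 := ℝ))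
    refine tendsto_of_tendsto_of_tendsto_of_le_of_le' hlow tendsto_const_nhds ?_ ?_ <;>
      filter_upwards [eventually_gt_atTop 1] with s hs
    · rw [le_div_iff₀ (by linarith), sub_mul, inv_mul_cancel₀ (by positivity), one_mul]
      exact sub_one_le_sq_Gamma_div_Gamma_sub_half hs
    · rw [div_le_one (by linarith)]
      linarith [sq_Gamma_div_Gamma_sub_half_le (s := s) (by linarith)]
  have hsqrt := (continuous_sqrt.tendsto 1).comp hsq
  rw [Function.comp_def, sqrt_one] at hsqrt
  refine hsqrt.congr' ?_
  filter_upwards [eventually_gt_atTop 1] with s hs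
  rw [sqrt_div (sq_nonneg _), sqrt_sq (div_pos (Gamma_pos_of_pos (by linarith))
    (Gamma_pos_of_pos (by linarith))).le]

theorem tendsto_one_add_div_rpow_mul_add (t a b : ℝ) :
    Tendsto (fun x => (1 + t / x) ^ (a * x + b)) atTop (𝓝 (exp (a * t))) := by
  have hbase : Tendsto (fun x => 1 + t / x) atTop (𝓝 1) := by
    simpa using tendsto_const_nhds.add ((tendsto_const_nhds (x := t)).div_atTop tendsto_id)
  have hlog : Tendsto (fun x => (a * x + b) * log (1 + t / x)) atTop (𝓝 (a * t)) := by
    have h := ((tendsto_mul_log_one_add_div_atTop t).const_mul a).add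
      (((continuousAt_log one_ne_zero).tendsto.comp hbase).const_mul b)
    rw [Function.comp_def, log_one, mul_zero, add_zero] at h
    exact h.congr fun x => by ring
  refine ((continuous_exp.tendsto _).comp hlog).congr' ?_
  filter_upwards [hbase.eventually (lt_mem_nhds one_pos)] with x hx
  rw [Function.comp_apply, rpow_def_of_pos (by linarith), mul_comm]

end Real

theorem rescaledDensity_eq_of_sq_le {n : ℕ} {z : ℝ} (hz : z ^ 2 ≤ (n : ℝ) + 2) :
    rescaledDensity n z =
      Gamma (((n : ℝ) + 2) / 2) / Gamma (((n : ℝ) + 2) / 2 - 1 / 2) / √(((n : ℝ) + 2) / 2) /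
        √(2 * π) * (1 + -z ^ 2 / ((n : ℝ) + 2)) ^ (1 / 2 * ((n : ℝ) + 2) + -3 / 2) := by
  have hx : (0 : ℝ) < (n : ℝ) + 2 := by positivity
  have hsqrt : 0 < √((n : ℝ) + 2) := sqrt_pos.2 hx
  have habs : |z| ≤ √((n : ℝ) + 2) := abs_le_sqrt hz
  have hmem : z / √((n : ℝ) + 2) ∈ Set.Icc (-1 : ℝ) 1 := by
    rwa [Set.mem_Icc, ← abs_le, abs_div, abs_of_pos hsqrt, div_le_one hsqrt]
  have hnorm : √((n : ℝ) / 2 + 1) * √(2 * π) = √((n : ℝ) + 2) * √π := by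
    rw [← sqrt_mul (by positivity), ← sqrt_mul hx.le]
    ring_nf
  rw [rescaledDensity, if_pos habs, ballCoordDensity, if_pos hmem, div_pow, sq_sqrt hx.le,
    show ((n : ℝ) + 2) / 2 = (n : ℝ) / 2 + 1 by ring,
    show (n : ℝ) / 2 + 1 - 1 / 2 = ((n : ℝ) + 1) / 2 by ring,
    show 1 / 2 * ((n : ℝ) + 2) + -3 / 2 = ((n : ℝ) - 1) / 2 by ring,
    neg_div, ← sub_eq_add_neg, div_div _ √((n : ℝ) / 2 + 1), div_div, hnorm]
  ring

/-- For every real `z`, the rescaled densities converge pointwise to the standard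
normal density: `lim_{n → ∞} g_n(z) = e^{−z²/2}/√(2π)`. -/
theorem tendsto_rescaledDensity_gaussian (z : ℝ) :
    Tendsto (fun n : ℕ => rescaledDensity n z) atTop
      (nhds (Real.exp (-z ^ 2 / 2) / Real.sqrt (2 * π))) := by
  have hx : Tendsto (fun n : ℕ => (n : ℝ) + 2) atTop atTop :=
    tendsto_atTop_add_const_right _ 2 tendsto_natCast_atTop_atTop
  have hgamma := (tendsto_Gamma_div_Gamma_sub_half_div_sqrt.comp
    (hx.atTop_div_const two_pos)).div_const √(2 * π)
  have hpow := (tendsto_one_add_div_rpow_mul_add (-z ^ 2) (1 / 2) (-3 / 2)).comp hx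
  have hlim := hgamma.mul hpow
  rw [show 1 / √(2 * π) * exp (1 / 2 * -z ^ 2) = exp (-z ^ 2 / 2) / √(2 * π) by ring_nf] at hlim
  refine hlim.congr' ?_
  filter_upwards [hx.eventually_ge_atTop (z ^ 2)] with n hn
  exact (rescaledDensity_eq_of_sq_le hn).symm
end

section
/- For every ε with 0 < ε ≤ 1, the probability mass of f_n outside [−ε, ε] tends to 0 as n → ∞; that is, lim_{n → ∞} ∫_{ε ≤ |x| ≤ 1} Γ(n/2 + 1) / (Γ((n+1)/2) · √π) · (1 - x²)^((n-1)/2) dx = 0. -/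
open Real Filter MeasureTheory

/-!
The normalising constant `Γ(n/2 + 1) / (Γ((n+1)/2) √π)` grows at most linearly in `n`, because
`Γ(x + 1) = x Γ(x) ≤ x Γ(x + 1/2)` by monotonicity of `Γ` on `[2, ∞)`. On the tail `ε ≤ |x| ≤ 1`
the factor `(1 - x²)^((n-1)/2)` is at most `r^(n-1)` with `r = √(1 - ε²) < 1`, so the tail mass is
at most `n r^(n-1)`, which tends to `0`.
-/

theorem Real.Gamma_add_one_le_mul_Gamma_add_half {x : ℝ} (hx : 2 ≤ x) :
    Gamma (x + 1) ≤ x * Gamma (x + 1 / 2) := by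
  rw [Gamma_add_one (by positivity)]
  gcongr
  exact Gamma_strictMonoOn_Ici.monotoneOn hx (by simp only [Set.mem_Ici]; linarith) (by linarith)

noncomputable def ballMarginalDensity (n : ℕ) (x : ℝ) : ℝ :=
  Gamma ((n : ℝ) / 2 + 1) / (Gamma (((n : ℝ) + 1) / 2) * √π) * (1 - x ^ 2) ^ (((n : ℝ) - 1) / 2)

lemma ballMarginalConst_le {n : ℕ} (hn : 4 ≤ n) :
    Gamma ((n : ℝ) / 2 + 1) / (Gamma (((n : ℝ) + 1) / 2) * √π) ≤ n / 2 := by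
  have hn' : (4 : ℝ) ≤ n := by exact_mod_cast hn
  have hGamma : 0 < Gamma (((n : ℝ) + 1) / 2) := Gamma_pos_of_pos (by positivity)
  have hπ : 1 ≤ √π := one_le_sqrt.mpr (by linarith [pi_gt_three])
  rw [div_le_iff₀ (by positivity)]
  calc Gamma ((n : ℝ) / 2 + 1) ≤ n / 2 * Gamma (n / 2 + 1 / 2) :=
        Gamma_add_one_le_mul_Gamma_add_half (by linarith)
    _ = n / 2 * Gamma (((n : ℝ) + 1) / 2) * 1 := by ring_nf
    _ ≤ n / 2 * (Gamma (((n : ℝ) + 1) / 2) * √π) := by rw [mul_assoc]; gcongr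

lemma Real.rpow_natCast_sub_one_div_two_le_pow {a r : ℝ} (ha : 0 ≤ a) (hr : 0 ≤ r)
    (har : a ≤ r ^ 2) {n : ℕ} (hn : 1 ≤ n) : a ^ (((n : ℝ) - 1) / 2) ≤ r ^ (n - 1) := by
  calc a ^ (((n : ℝ) - 1) / 2) ≤ (r ^ 2) ^ (((n : ℝ) - 1) / 2) :=
        rpow_le_rpow ha har (by have : (1 : ℝ) ≤ n := (by exact_mod_cast hn); linarith)
    _ = r ^ (n - 1) := by
        rw [← rpow_natCast_mul hr,
          show ((2 : ℕ) : ℝ) * (((n : ℝ) - 1) / 2) = ((n - 1 : ℕ) : ℝ) by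
            push_cast [Nat.cast_sub hn]; ring,
          rpow_natCast]

lemma norm_ballMarginalDensity_le {n : ℕ} (hn : 4 ≤ n) {x r : ℝ} (hr : 0 ≤ r) (hx : |x| ≤ 1)
    (hxr : 1 - x ^ 2 ≤ r ^ 2) : ‖ballMarginalDensity n x‖ ≤ n / 2 * r ^ (n - 1) := by
  have hbase : 0 ≤ 1 - x ^ 2 := by nlinarith [sq_abs x, abs_nonneg x]
  rw [ballMarginalDensity, norm_of_nonneg (by positivity)]
  exact mul_le_mul (ballMarginalConst_le hn)
    (rpow_natCast_sub_one_div_two_le_pow hbase hr hxr (by omega)) (by positivity) (by positivity)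

lemma tendsto_natCast_mul_pow_sub_one_atTop_nhds_zero {r : ℝ} (hr0 : 0 ≤ r) (hr1 : r < 1) :
    Tendsto (fun n : ℕ => (n : ℝ) * r ^ (n - 1)) atTop (nhds 0) := by
  have hr : |r| < 1 := by rwa [abs_of_nonneg hr0]
  refine (tendsto_add_atTop_iff_nat 1).mp ?_
  simpa [add_mul] using (tendsto_pow_const_mul_const_pow_of_abs_lt_one 1 hr).add
    (tendsto_pow_atTop_nhds_zero_of_abs_lt_one hr)

theorem tendsto_tail_mass_zero_general (ε : ℝ) (hε0 : 0 < ε) :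
    Tendsto
      (fun n : ℕ =>
        ∫ x in {x : ℝ | ε ≤ |x| ∧ |x| ≤ 1},
          Real.Gamma ((n : ℝ) / 2 + 1) / (Real.Gamma (((n : ℝ) + 1) / 2) * Real.sqrt π) *
            (1 - x ^ 2) ^ (((n : ℝ) - 1) / 2))
      atTop (nhds 0) := by
  set S := {x : ℝ | ε ≤ |x| ∧ |x| ≤ 1}
  set r := √(1 - ε ^ 2)
  have hr1 : r < 1 := (sqrt_lt' one_pos).mpr (by nlinarith)
  have hS : S ⊆ Set.Icc (-1) 1 := fun x hx => abs_le.mp hx.2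
  have hbound : ∀ x ∈ S, 1 - x ^ 2 ≤ r ^ 2 := fun x ⟨hεx, hx1⟩ => by
    rw [sq_sqrt (by nlinarith [sq_abs x, abs_nonneg x])]
    nlinarith [sq_abs x]
  refine squeeze_zero_norm' ?_
    (tendsto_natCast_mul_pow_sub_one_atTop_nhds_zero (sqrt_nonneg _) hr1)
  filter_upwards [eventually_ge_atTop 4] with n hn
  calc _ ≤ n / 2 * r ^ (n - 1) * volume.real S :=
        norm_setIntegral_le_of_norm_le_const (measure_lt_top_of_subset hS (by simp)) fun x hx =>
          norm_ballMarginalDensity_le hn (sqrt_nonneg _) hx.2 (hbound x hx)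
    _ ≤ n / 2 * r ^ (n - 1) * 2 := by
        gcongr
        calc volume.real S ≤ volume.real (Set.Icc (-1 : ℝ) 1) :=
              measureReal_mono hS measure_Icc_lt_top.ne
          _ = 2 := by norm_num
    _ = n * r ^ (n - 1) := by ring

/-- For every `ε` with `0 < ε ≤ 1`, the probability mass of `f_n` outside `[−ε, ε]`
tends to `0` as `n → ∞`:
`lim_{n → ∞} ∫_{ε ≤ |x| ≤ 1} Γ(n/2+1)/(Γ((n+1)/2)·√π) · (1-x²)^((n-1)/2) dx = 0`. -/
theorem tendsto_tail_mass_zero (ε : ℝ) (hε0 : 0 < ε) (hε1 : ε ≤ 1) :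
    Tendsto
      (fun n : ℕ =>
        ∫ x in {x : ℝ | ε ≤ |x| ∧ |x| ≤ 1},
          Real.Gamma ((n : ℝ) / 2 + 1) / (Real.Gamma (((n : ℝ) + 1) / 2) * Real.sqrt π) *
            (1 - x ^ 2) ^ (((n : ℝ) - 1) / 2))
      atTop (nhds 0) :=
  tendsto_tail_mass_zero_general ε hε0
end
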